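/- Let (x^k, u^k) be NCS iterates and let x⋆ be a primal solution with dual certificate u⋆. Then both sequences k ↦ D(x^{k+1} − x^k, u^{k+1} − u^k) and k ↦ D(x^k − x⋆, u^k − u⋆) are nonincreasing in k. -/

import Mathlib

open Matrix

-- Moore–Penrose pseudoinverse, characterized by the four Penrose conditions
-- (which determine it uniquely when a solution exists).
open Classical in
noncomputable def mpInv {k l : ℕ} (A : Matrix (Fin k) (Fin l) ℝ) : Matrix (Fin l) (Fin k) ℝ :=
  if h : ∃ X : Matrix (Fin l) (Fin k) ℝ,
      A * X * A = A ∧ X * A * X = X ∧ (A * X)ᵀ = A * X ∧ (X * A)ᵀ = X * A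
  then h.choose else 0

-- `ProxRel g α z u'` says that `u' = prox_{αg*}(z)`, i.e. that
-- `α⁻¹ (z - u')` is a minimizer of `x ↦ g(x) + (α/2)‖x - z/α‖²`
-- (by Moreau's identity `prox_{αg*}(z) = z - α argmin_x {g(x) + (α/2)‖x - z/α‖²}`).
def ProxRel {m : ℕ} (g : (Fin m → ℝ) → ℝ) (α : ℝ) (z u' : Fin m → ℝ) : Prop :=
  IsMinOn (fun y : Fin m → ℝ => g y + (α / 2) * ((y - α⁻¹ • z) ⬝ᵥ (y - α⁻¹ • z)))
    Set.univ (α⁻¹ • (z - u'))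

/-- The squared seminorm `D²(x, u) = ‖u − αAx‖² + ‖x‖²_{αM − α²AᵀA}`. -/
noncomputable def Dsq {m n : ℕ} (A : Matrix (Fin m) (Fin n) ℝ) (α : ℝ)
    (M : Matrix (Fin n) (Fin n) ℝ) (x : Fin n → ℝ) (u : Fin m → ℝ) : ℝ :=
  (u - α • (A *ᵥ x)) ⬝ᵥ (u - α • (A *ᵥ x)) +
    x ⬝ᵥ ((α • M - α ^ 2 • (Aᵀ * A)) *ᵥ x)

/-- The seminorm `D(x, u) = (‖u − αAx‖² + ‖x‖²_{αM − α²AᵀA})^{1/2}`. -/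
noncomputable def Dnorm {m n : ℕ} (A : Matrix (Fin m) (Fin n) ℝ) (α : ℝ)
    (M : Matrix (Fin n) (Fin n) ℝ) (x : Fin n → ℝ) (u : Fin m → ℝ) : ℝ :=
  Real.sqrt (Dsq A α M x u)

/-!
Any two NCS trajectories approach each other in the seminorm `D`. If `M x' = M x - Aᵀu`,
polarization of `D²` gives
`D²(x, u) = D²(x', u') + D²(x - x', u - u') + 2⟨u', (u - u') + αA(2x' - x)⟩`,
and for the differences of two transitions the cross term is nonnegative by monotonicity of `∂g`,
since the prox step makes `u'` a subgradient of `g` at `A(2x' - x) - b + α⁻¹(u - u')`.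
Comparing a trajectory with its shift gives the first claim; comparing it with the constant
trajectory `(x⋆, u⋆)`, which satisfies the same two relations, gives the second. The pseudoinverse
step does satisfy `M x' = M x - Aᵀu`: `M - αAᵀA ⪰ 0` forces `ker M ⊆ ker A`, so `Aᵀu ∈ range M`.
-/

section Subgradient

variable {ι : Type*} [Fintype ι]

def IsSubgradient (g : (ι → ℝ) → ℝ) (v p : ι → ℝ) : Prop :=
  ∀ y, g p + v ⬝ᵥ (y - p) ≤ g y

theorem IsSubgradient.dotProduct_sub_nonneg {g : (ι → ℝ) → ℝ} {v₁ v₂ p₁ p₂ : ι → ℝ}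
    (h₁ : IsSubgradient g v₁ p₁) (h₂ : IsSubgradient g v₂ p₂) :
    0 ≤ (v₁ - v₂) ⬝ᵥ (p₁ - p₂) := by
  have h₁₂ := h₁ p₂
  have h₂₁ := h₂ p₁
  simp only [sub_dotProduct, dotProduct_sub] at h₁₂ h₂₁ ⊢
  linarith

theorem ConvexOn.isSubgradient_of_isMinOn_add_sq {g : (ι → ℝ) → ℝ}
    (hg : ConvexOn ℝ Set.univ g) {α : ℝ} {c p : ι → ℝ}
    (hp : IsMinOn (fun y => g y + α / 2 * ((y - c) ⬝ᵥ (y - c))) Set.univ p) :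
    IsSubgradient g (α • (c - p)) p := by
  intro y
  set d := y - p
  have key : ∀ t ∈ Set.Ioc (0 : ℝ) 1,
      g p + (α • (c - p)) ⬝ᵥ d ≤ g y + t * (α / 2 * (d ⬝ᵥ d)) := by
    rintro t ⟨ht₀, ht₁⟩
    have hmin := isMinOn_iff.mp hp (p + t • d) (Set.mem_univ _)
    have hconv : g (p + t • d) ≤ (1 - t) * g p + t * g y := by
      have := hg.2 (Set.mem_univ p) (Set.mem_univ y) (sub_nonneg.2 ht₁) ht₀.le (by ring)
      rwa [show (1 - t) • p + t • y = p + t • d by simp only [d]; module] at this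
    have hsq : (p + t • d - c) ⬝ᵥ (p + t • d - c)
        = (p - c) ⬝ᵥ (p - c) - 2 * t * ((c - p) ⬝ᵥ d) + t ^ 2 * (d ⬝ᵥ d) := by
      rw [show p + t • d - c = (p - c) + t • d by abel]
      simp only [dotProduct_add, add_dotProduct, dotProduct_smul, smul_dotProduct,
        smul_eq_mul, ← neg_sub c p, neg_dotProduct, dotProduct_comm d]
      ring
    refine le_of_mul_le_mul_left ?_ ht₀
    simp only [smul_dotProduct, smul_eq_mul]
    rw [hsq] at hmin
    linear_combination hmin + hconv
  have hlim : Filter.Tendsto (fun t : ℝ => g y + t * (α / 2 * (d ⬝ᵥ d)))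
      (nhdsWithin 0 (Set.Ioi 0)) (nhds (g y)) := by
    have : Continuous (fun t : ℝ => g y + t * (α / 2 * (d ⬝ᵥ d))) := by fun_prop
    simpa using this.continuousWithinAt.tendsto (x := 0) (s := Set.Ioi 0)
  exact ge_of_tendsto hlim (Filter.eventually_of_mem (Ioc_mem_nhdsGT zero_lt_one) key)

end Subgradient

theorem ProxRel.isSubgradient {m : ℕ} {g : (Fin m → ℝ) → ℝ} (hg : ConvexOn ℝ Set.univ g)
    {α : ℝ} (hα : α ≠ 0) {z u' : Fin m → ℝ} (h : ProxRel g α z u') :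
    IsSubgradient g u' (α⁻¹ • (z - u')) := by
  convert hg.isSubgradient_of_isMinOn_add_sq h using 1
  rw [← smul_sub, sub_sub_cancel, smul_smul, mul_inv_cancel₀ hα, one_smul]

theorem exists_penrose_of_isHermitian {n : ℕ} {M : Matrix (Fin n) (Fin n) ℝ}
    (hM : M.IsHermitian) :
    ∃ X : Matrix (Fin n) (Fin n) ℝ,
      M * X * M = M ∧ X * M * X = X ∧ (M * X)ᵀ = M * X ∧ (X * M)ᵀ = X * M := by
  set U : Matrix (Fin n) (Fin n) ℝ := (hM.eigenvectorUnitary : Matrix (Fin n) (Fin n) ℝ)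
  have hUU : star U * U = 1 := Unitary.coe_star_mul_self _
  set d : Fin n → ℝ := RCLike.ofReal ∘ hM.eigenvalues
  have conj_mul_conj : ∀ D₁ D₂ : Matrix (Fin n) (Fin n) ℝ,
      U * D₁ * star U * (U * D₂ * star U) = U * (D₁ * D₂) * star U := by
    intro D₁ D₂
    calc U * D₁ * star U * (U * D₂ * star U)
        = U * D₁ * ((star U * U) * (D₂ * star U)) := by simp only [mul_assoc]
      _ = U * (D₁ * D₂) * star U := by rw [hUU, one_mul]; simp only [mul_assoc]
  have transpose_conj_diagonal : ∀ f : Fin n → ℝ,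
      (U * diagonal f * star U)ᵀ = U * diagonal f * star U := by
    intro f
    rw [star_eq_conjTranspose, conjTranspose_eq_transpose_of_trivial, transpose_mul,
      transpose_mul, transpose_transpose, diagonal_transpose, mul_assoc]
  have hd : ∀ i, d i * (d i)⁻¹ * d i = d i ∧ (d i)⁻¹ * d i * (d i)⁻¹ = (d i)⁻¹ := by
    intro i
    by_cases h : d i = 0 <;> simp [h]
  have hspec : M = U * diagonal d * star U := hM.spectral_theorem
  rw [hspec]
  refine ⟨U * diagonal (fun i => (d i)⁻¹) * star U, ?_, ?_, ?_, ?_⟩ <;>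
    simp only [conj_mul_conj, diagonal_mul_diagonal, transpose_conj_diagonal]
  · simp only [(hd _).1]
  · simp only [(hd _).2]

theorem penrose_mpInv_of_isHermitian {n : ℕ} {M : Matrix (Fin n) (Fin n) ℝ}
    (hM : M.IsHermitian) :
    M * mpInv M * M = M ∧ mpInv M * M * mpInv M = mpInv M ∧
      (M * mpInv M)ᵀ = M * mpInv M ∧ (mpInv M * M)ᵀ = mpInv M * M := by
  have hex := exists_penrose_of_isHermitian hM
  rw [mpInv, dif_pos hex]
  exact hex.choose_spec

theorem mulVec_mpInv_mulVec_eq_self {n : ℕ} {M : Matrix (Fin n) (Fin n) ℝ} (hM : Mᵀ = M)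
    {κ : Type*} [Fintype κ] {B : Matrix κ (Fin n) ℝ}
    (hker : ∀ w, M *ᵥ w = 0 → B *ᵥ w = 0) (v : κ → ℝ) :
    M *ᵥ (mpInv M *ᵥ (Bᵀ *ᵥ v)) = Bᵀ *ᵥ v := by
  obtain ⟨hMXM, -, hMX, -⟩ := penrose_mpInv_of_isHermitian (M := M) <| by
    rw [Matrix.IsHermitian, conjTranspose_eq_transpose_of_trivial, hM]
  -- `N` is the orthogonal projection onto `ker M`, which `B` annihilates.
  set N : Matrix (Fin n) (Fin n) ℝ := 1 - M * mpInv M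
  have hN : Nᵀ = N := by rw [transpose_sub, transpose_one, hMX]
  have hMN : M * N = 0 := by
    have h : N * M = 0 := by rw [sub_mul, one_mul, hMXM, sub_self]
    simpa only [transpose_mul, hN, hM, transpose_zero] using congrArg transpose h
  have hBN : ∀ w, B *ᵥ (N *ᵥ w) = 0 := fun w =>
    hker _ (by rw [mulVec_mulVec, hMN, zero_mulVec])
  set r := N *ᵥ (Bᵀ *ᵥ v)
  have hr : r = 0 := by
    rw [← dotProduct_self_eq_zero]
    calc r ⬝ᵥ r = (Bᵀ *ᵥ v) ⬝ᵥ (N *ᵥ r) := by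
          rw [dotProduct_mulVec]; nth_rw 1 [← hN]; rw [vecMul_transpose, dotProduct_comm]
      _ = v ⬝ᵥ (B *ᵥ (N *ᵥ r)) := by rw [mulVec_transpose, dotProduct_mulVec v B]
      _ = 0 := by rw [hBN, dotProduct_zero]
  simp only [r, N, sub_mulVec, one_mulVec, sub_eq_zero] at hr
  rw [mulVec_mulVec, ← hr]

section Seminorm

variable {m n : ℕ} {A : Matrix (Fin m) (Fin n) ℝ} {α : ℝ} {M : Matrix (Fin n) (Fin n) ℝ}

theorem dotProduct_transpose_mul_self_mulVec {ι κ : Type*} [Fintype ι] [Fintype κ]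
    (B : Matrix κ ι ℝ) (x : ι → ℝ) :
    x ⬝ᵥ ((Bᵀ * B) *ᵥ x) = (B *ᵥ x) ⬝ᵥ (B *ᵥ x) := by
  rw [← mulVec_mulVec, dotProduct_mulVec, vecMul_transpose]

theorem mulVec_eq_zero_of_posSemidef_sub (hα : 0 < α) (hMpsd : (M - α • (Aᵀ * A)).PosSemidef)
    {w : Fin n → ℝ} (hw : M *ᵥ w = 0) : A *ᵥ w = 0 := by
  have hnonneg := hMpsd.dotProduct_mulVec_nonneg w
  rw [star_trivial, sub_mulVec, dotProduct_sub, hw, dotProduct_zero, smul_mulVec, dotProduct_smul,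
    dotProduct_transpose_mul_self_mulVec, smul_eq_mul, zero_sub, neg_nonneg] at hnonneg
  rw [← dotProduct_self_eq_zero]
  exact le_antisymm (nonpos_of_mul_nonpos_right hnonneg hα) (dotProduct_star_self_nonneg _)

theorem Dsq_eq (x : Fin n → ℝ) (u : Fin m → ℝ) :
    Dsq A α M x u = u ⬝ᵥ u - 2 * α * (u ⬝ᵥ (A *ᵥ x)) + α * (x ⬝ᵥ (M *ᵥ x)) := by
  simp only [Dsq, sub_mulVec, smul_mulVec, dotProduct_sub, sub_dotProduct, dotProduct_smul,
    smul_dotProduct, smul_eq_mul, dotProduct_transpose_mul_self_mulVec, dotProduct_comm (A *ᵥ x) u]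
  ring

theorem Dsq_nonneg (hα : 0 ≤ α) (hMpsd : (M - α • (Aᵀ * A)).PosSemidef)
    (x : Fin n → ℝ) (u : Fin m → ℝ) : 0 ≤ Dsq A α M x u := by
  have hform : α • M - α ^ 2 • (Aᵀ * A) = α • (M - α • (Aᵀ * A)) := by
    rw [smul_sub, smul_smul, sq]
  rw [Dsq, hform, smul_mulVec, dotProduct_smul, smul_eq_mul]
  exact add_nonneg (dotProduct_star_self_nonneg _)
    (mul_nonneg hα (hMpsd.dotProduct_mulVec_nonneg x))

theorem Dsq_eq_add_of_mulVec_eq (hM : Mᵀ = M) {x x' : Fin n → ℝ} {u u' : Fin m → ℝ}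
    (hstep : M *ᵥ x' = M *ᵥ x - Aᵀ *ᵥ u) :
    Dsq A α M x u = Dsq A α M x' u' + Dsq A α M (x - x') (u - u')
      + 2 * (u' ⬝ᵥ ((u - u') + α • (A *ᵥ ((2 : ℝ) • x' - x)))) := by
  have hsymm : x' ⬝ᵥ (M *ᵥ x) = x ⬝ᵥ (M *ᵥ x') := by
    conv_lhs => rw [← hM]
    rw [dotProduct_mulVec, vecMul_transpose, dotProduct_comm]
  have hstep' : x' ⬝ᵥ (M *ᵥ x') = x ⬝ᵥ (M *ᵥ x') - u ⬝ᵥ (A *ᵥ x') := by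
    have h : x' ⬝ᵥ (M *ᵥ x') = x' ⬝ᵥ (M *ᵥ x - Aᵀ *ᵥ u) := by rw [hstep]
    rwa [dotProduct_sub, hsymm, dotProduct_mulVec x' Aᵀ, vecMul_transpose,
      dotProduct_comm (A *ᵥ x')] at h
  simp only [Dsq_eq, mulVec_sub, mulVec_smul, dotProduct_sub, sub_dotProduct, dotProduct_add,
    dotProduct_smul, smul_eq_mul, hsymm, dotProduct_comm u u']
  linear_combination (-2 * α) * hstep'

end Seminorm

section NCS

variable {m n : ℕ} {A : Matrix (Fin m) (Fin n) ℝ} {b : Fin m → ℝ} {α : ℝ}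
  {g : (Fin m → ℝ) → ℝ} {M : Matrix (Fin n) (Fin n) ℝ}

structure IsNCSStep (A : Matrix (Fin m) (Fin n) ℝ) (b : Fin m → ℝ) (α : ℝ)
    (g : (Fin m → ℝ) → ℝ) (M : Matrix (Fin n) (Fin n) ℝ)
    (x : Fin n → ℝ) (u : Fin m → ℝ) (x' : Fin n → ℝ) (u' : Fin m → ℝ) : Prop where
  mulVec_eq : M *ᵥ x' = M *ᵥ x - Aᵀ *ᵥ u
  isSubgradient : IsSubgradient g u' (A *ᵥ ((2 : ℝ) • x' - x) - b + α⁻¹ • (u - u'))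

theorem isNCSStep_of_update (hα : 0 < α) (hg : ConvexOn ℝ Set.univ g) (hM : Mᵀ = M)
    (hMpsd : (M - α • (Aᵀ * A)).PosSemidef) {x x' : Fin n → ℝ} {u u' : Fin m → ℝ}
    (hx : x' = x - mpInv M *ᵥ (Aᵀ *ᵥ u))
    (hu : ProxRel g α (u + α • (A *ᵥ ((2 : ℝ) • x' - x) - b)) u') :
    IsNCSStep A b α g M x u x' u' where
  mulVec_eq := by
    rw [hx, mulVec_sub,
      mulVec_mpInv_mulVec_eq_self hM (fun _ => mulVec_eq_zero_of_posSemidef_sub hα hMpsd)]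
  isSubgradient := by
    convert hu.isSubgradient hg hα.ne' using 1
    rw [add_sub_right_comm, smul_add, smul_smul, inv_mul_cancel₀ hα.ne', one_smul, add_comm]

theorem isNCSStep_of_isSubgradient {xs : Fin n → ℝ} {us : Fin m → ℝ} (hus : Aᵀ *ᵥ us = 0)
    (hsub : IsSubgradient g us (A *ᵥ xs - b)) : IsNCSStep A b α g M xs us xs us where
  mulVec_eq := by rw [hus, sub_zero]
  isSubgradient := by
    rwa [two_smul, add_sub_cancel_right, sub_self, smul_zero, add_zero]

theorem IsNCSStep.Dsq_sub_le (hα : 0 < α) (hM : Mᵀ = M)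
    (hMpsd : (M - α • (Aᵀ * A)).PosSemidef) {x x' y y' : Fin n → ℝ} {u u' v v' : Fin m → ℝ}
    (h₁ : IsNCSStep A b α g M x u x' u') (h₂ : IsNCSStep A b α g M y v y' v') :
    Dsq A α M (x' - y') (u' - v') ≤ Dsq A α M (x - y) (u - v) := by
  have hstep : M *ᵥ (x' - y') = M *ᵥ (x - y) - Aᵀ *ᵥ (u - v) := by
    simp only [mulVec_sub, h₁.mulVec_eq, h₂.mulVec_eq]
    abel
  have hcross : 0 ≤ (u' - v') ⬝ᵥ ((u - v - (u' - v'))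
      + α • (A *ᵥ ((2 : ℝ) • (x' - y') - (x - y)))) := by
    have hmono := h₁.isSubgradient.dotProduct_sub_nonneg h₂.isSubgradient
    have hdiff : u - v - (u' - v') + α • (A *ᵥ ((2 : ℝ) • (x' - y') - (x - y)))
        = α • ((A *ᵥ ((2 : ℝ) • x' - x) - b + α⁻¹ • (u - u'))
          - (A *ᵥ ((2 : ℝ) • y' - y) - b + α⁻¹ • (v - v'))) := by
      simp only [mulVec_sub, mulVec_smul, smul_sub, smul_add, smul_smul,
        mul_inv_cancel₀ hα.ne', one_smul]
      abel
    rw [hdiff, dotProduct_smul, smul_eq_mul]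
    exact mul_nonneg hα.le hmono
  have hpolar := Dsq_eq_add_of_mulVec_eq (α := α) (u' := u' - v') hM hstep
  have hgap := Dsq_nonneg hα.le hMpsd (x - y - (x' - y')) (u - v - (u' - v'))
  linarith

end NCS

theorem ncs_monotone_general
    {m n : ℕ}
    (A : Matrix (Fin m) (Fin n) ℝ) (b : Fin m → ℝ)
    (α : ℝ) (hα : 0 < α)
    (g : (Fin m → ℝ) → ℝ) (hg : ConvexOn ℝ Set.univ g)
    (M : Matrix (Fin n) (Fin n) ℝ) (hMsymm : Mᵀ = M)
    (hMpsd : (M - α • (Aᵀ * A)).PosSemidef)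
    -- NCS iterates:
    (x : ℕ → Fin n → ℝ) (u : ℕ → Fin m → ℝ)
    (hx : ∀ k, x (k + 1) = x k - mpInv M *ᵥ (Aᵀ *ᵥ u k))
    (hu : ∀ k, ProxRel g α
      (u k + α • (A *ᵥ ((2 : ℝ) • x (k + 1) - x k) - b)) (u (k + 1)))
    -- a primal solution x⋆ with dual certificate u⋆:
    (xs : Fin n → ℝ) (us : Fin m → ℝ)
    (hus : Aᵀ *ᵥ us = 0)
    (hsub : ∀ y, g (A *ᵥ xs - b) + us ⬝ᵥ (y - (A *ᵥ xs - b)) ≤ g y) :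
    (∀ k : ℕ,
      Dnorm A α M (x (k + 2) - x (k + 1)) (u (k + 2) - u (k + 1)) ≤
        Dnorm A α M (x (k + 1) - x k) (u (k + 1) - u k)) ∧
    (∀ k : ℕ,
      Dnorm A α M (x (k + 1) - xs) (u (k + 1) - us) ≤
        Dnorm A α M (x k - xs) (u k - us)) := by
  have hstep : ∀ k, IsNCSStep A b α g M (x k) (u k) (x (k + 1)) (u (k + 1)) := fun k =>
    isNCSStep_of_update hα hg hMsymm hMpsd (hx k) (hu k)
  have hfixed : IsNCSStep A b α g M xs us xs us := isNCSStep_of_isSubgradient hus hsub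
  exact ⟨fun k => Real.sqrt_le_sqrt ((hstep (k + 1)).Dsq_sub_le hα hMsymm hMpsd (hstep k)),
    fun k => Real.sqrt_le_sqrt ((hstep k).Dsq_sub_le hα hMsymm hMpsd hfixed)⟩

theorem ncs_monotone
    {m n : ℕ}
    (A : Matrix (Fin m) (Fin n) ℝ) (b : Fin m → ℝ)
    (α : ℝ) (hα : 0 < α)
    (g : (Fin m → ℝ) → ℝ) (hg : ConvexOn ℝ Set.univ g)
    (M : Matrix (Fin n) (Fin n) ℝ) (hMsymm : Mᵀ = M)
    (hMpsd : (M - α • (Aᵀ * A)).PosSemidef)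
    -- NCS iterates:
    (x : ℕ → Fin n → ℝ) (u : ℕ → Fin m → ℝ)
    (hx : ∀ k, x (k + 1) = x k - mpInv M *ᵥ (Aᵀ *ᵥ u k))
    (hu : ∀ k, ProxRel g α
      (u k + α • (A *ᵥ ((2 : ℝ) • x (k + 1) - x k) - b)) (u (k + 1)))
    -- a primal solution x⋆ with dual certificate u⋆:
    (xs : Fin n → ℝ) (us : Fin m → ℝ)
    (hxs : ∀ y, g (A *ᵥ xs - b) ≤ g (A *ᵥ y - b))
    (hus : Aᵀ *ᵥ us = 0)
    (hsub : ∀ y, g (A *ᵥ xs - b) + us ⬝ᵥ (y - (A *ᵥ xs - b)) ≤ g y) :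
    (∀ k : ℕ,
      Dnorm A α M (x (k + 2) - x (k + 1)) (u (k + 2) - u (k + 1)) ≤
        Dnorm A α M (x (k + 1) - x k) (u (k + 1) - u k)) ∧
    (∀ k : ℕ,
      Dnorm A α M (x (k + 1) - xs) (u (k + 1) - us) ≤
        Dnorm A α M (x k - xs) (u k - us)) :=
  ncs_monotone_general A b α hα g hg M hMsymm hMpsd x u hx hu xs us hus hsub
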